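/- For any matrix A ∈ ℝ^{m×n} and a standard Gaussian random vector z ∈ ℝ^n, the expected Euclidean norm of Az satisfies E‖Az‖ ≥ √(2/π) ‖A‖_F, where ‖A‖_F is the Frobenius norm. -/

import Mathlib

/-!
Write `a i` for the rows of `A`. Cauchy–Schwarz with the row norms as weights gives, pointwise,
`‖A‖_F * ‖A z‖ ≥ ∑ i, ‖a i‖ * |⟪a i, z⟫|`. Each `⟪a i, z⟫` is centred Gaussian with variance
`‖a i‖ ^ 2`, so `E |⟪a i, z⟫| = √(2 / π) * ‖a i‖`; taking expectations yields
`‖A‖_F * E ‖A z‖ ≥ √(2 / π) * ‖A‖_F ^ 2`.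
-/

open MeasureTheory ProbabilityTheory Real
open scoped NNReal

lemma integral_Ioi_mul_exp_neg_mul_sq {b : ℝ} (hb : 0 < b) :
    ∫ x in Set.Ioi (0 : ℝ), x * exp (-b * x ^ 2) = (2 * b)⁻¹ := by
  have h := integral_mul_cexp_neg_mul_sq (b := (b : ℂ)) (by simpa using hb)
  rw [← Complex.ofReal_inj, ← integral_complex_ofReal]
  push_cast
  exact h

lemma integral_abs_gaussianReal (v : ℝ≥0) :
    ∫ x, |x| ∂gaussianReal 0 v = √(2 / π) * √v := by
  rcases eq_or_ne v 0 with rfl | hv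
  · simp [gaussianReal_zero_var]
  have hpdf : ∀ x, gaussianPDFReal 0 v x • |x|
      = (√(2 * π * v))⁻¹ * (|x| * exp (-(2 * (v : ℝ))⁻¹ * |x| ^ 2)) := by
    intro x
    rw [gaussianPDFReal, smul_eq_mul, sq_abs, sub_zero, neg_div, div_eq_inv_mul, neg_mul]
    ring
  simp_rw [integral_gaussianReal_eq_integral_smul hv, hpdf, integral_const_mul]
  rw [integral_comp_abs (f := fun x ↦ x * exp (-(2 * (v : ℝ))⁻¹ * x ^ 2)),
    integral_Ioi_mul_exp_neg_mul_sq (by positivity)]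
  rw [← sqrt_mul (by positivity), eq_comm, sqrt_eq_iff_mul_self_eq_of_pos (by positivity)]
  field_simp
  exact (sq_sqrt (by positivity)).symm

lemma sqrt_sum_sq_le_sum_abs {ι : Type*} (s : Finset ι) (y : ι → ℝ) :
    √(∑ i ∈ s, y i ^ 2) ≤ ∑ i ∈ s, |y i| := by
  rw [sqrt_le_left (Finset.sum_nonneg fun i _ ↦ abs_nonneg _)]
  simpa only [sq_abs] using Finset.sum_sq_le_sq_sum_of_nonneg (fun i _ ↦ abs_nonneg (y i))

section StdGaussian

variable {E : Type*} [NormedAddCommGroup E] [InnerProductSpace ℝ E] [FiniteDimensional ℝ E]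
  [MeasurableSpace E] [BorelSpace E]

lemma map_strongDual_stdGaussian (L : StrongDual ℝ E) :
    (stdGaussian E).map L = gaussianReal 0 (‖L‖ ^ 2).toNNReal := by
  rw [IsGaussian.map_eq_gaussianReal, integral_strongDual_stdGaussian, variance_dual_stdGaussian]

lemma integral_abs_strongDual_stdGaussian (L : StrongDual ℝ E) :
    ∫ x, |L x| ∂stdGaussian E = √(2 / π) * ‖L‖ := by
  rw [← integral_map (f := fun y ↦ |y|) L.continuous.aemeasurable (by fun_prop),
    map_strongDual_stdGaussian, integral_abs_gaussianReal, Real.coe_toNNReal _ (by positivity),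
    sqrt_sq (norm_nonneg _)]

variable {ι : Type*} [Fintype ι]

lemma integrable_sqrt_sum_sq_strongDual_stdGaussian (L : ι → StrongDual ℝ E) :
    Integrable (fun x ↦ √(∑ i, L i x ^ 2)) (stdGaussian E) := by
  refine (integrable_finsetSum Finset.univ fun i _ ↦
    (IsGaussian.integrable_dual _ (L i)).abs).mono' (by fun_prop) (ae_of_all _ fun x ↦ ?_)
  rw [norm_of_nonneg (sqrt_nonneg _)]
  exact sqrt_sum_sq_le_sum_abs _ _

theorem sqrt_two_div_pi_mul_sqrt_sum_norm_sq_le_integral_stdGaussian (L : ι → StrongDual ℝ E) :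
    √(2 / π) * √(∑ i, ‖L i‖ ^ 2) ≤ ∫ x, √(∑ i, L i x ^ 2) ∂stdGaussian E := by
  rcases (sqrt_nonneg (∑ i, ‖L i‖ ^ 2)).eq_or_lt with hF | hF
  · rw [← hF, mul_zero]
    exact integral_nonneg fun x ↦ sqrt_nonneg _
  set F := √(∑ i, ‖L i‖ ^ 2)
  have hF2 : F * F = ∑ i, ‖L i‖ ^ 2 := mul_self_sqrt (Finset.sum_nonneg fun i _ ↦ by positivity)
  have hpt : ∀ x, ∑ i, ‖L i‖ * |L i x| ≤ F * √(∑ i, L i x ^ 2) := fun x ↦ by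
    simpa only [sq_abs] using Real.sum_mul_le_sqrt_mul_sqrt Finset.univ (‖L ·‖) (|L · x|)
  have hint : ∀ i, Integrable (fun x ↦ ‖L i‖ * |L i x|) (stdGaussian E) := fun i ↦
    (IsGaussian.integrable_dual _ (L i)).abs.const_mul _
  have hweighted : ∫ x, ∑ i, ‖L i‖ * |L i x| ∂stdGaussian E = √(2 / π) * (F * F) := by
    simp_rw [integral_finsetSum _ fun i _ ↦ hint i, integral_const_mul,
      integral_abs_strongDual_stdGaussian, hF2, Finset.mul_sum]
    exact Finset.sum_congr rfl fun i _ ↦ by ring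
  have hmono := integral_mono (integrable_finsetSum _ fun i _ ↦ hint i)
    ((integrable_sqrt_sum_sq_strongDual_stdGaussian L).const_mul F) hpt
  rw [hweighted, integral_const_mul] at hmono
  exact le_of_mul_le_mul_left (by linarith) hF

end StdGaussian

theorem stmt_0 (m n : ℕ) (A : Matrix (Fin m) (Fin n) ℝ) :
    Real.sqrt (2 / Real.pi) * Real.sqrt (∑ i, ∑ j, (A i j) ^ 2) ≤
      ∫ z : Fin n → ℝ, Real.sqrt (∑ i, (A.mulVec z i) ^ 2)
        ∂(Measure.pi fun _ : Fin n => gaussianReal 0 1) := by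
  let L : Fin m → StrongDual ℝ (EuclideanSpace ℝ (Fin n)) := fun i ↦
    innerSL ℝ (WithLp.toLp 2 (A i))
  have hnorm : ∀ i, ‖L i‖ ^ 2 = ∑ j, A i j ^ 2 := fun i ↦ by
    simp [L, EuclideanSpace.norm_sq_eq]
  have happly : ∀ i z, L i (WithLp.toLp 2 z) = A.mulVec z i := fun i z ↦ by
    simp [L, Matrix.mulVec, dotProduct, PiLp.inner_apply, mul_comm]
  have h := sqrt_two_div_pi_mul_sqrt_sum_norm_sq_le_integral_stdGaussian L
  rw [← map_pi_eq_stdGaussian, integral_map (by fun_prop) (by fun_prop)] at h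
  simpa only [hnorm, happly] using h
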